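/- arXiv:2407.06819 — 2 statements merged into one kernel-verified Lean document; each statement's English description precedes it below -/
import Mathlib

section
/- Let R be a commutative ring and 0 → E → F → G → 0 a short exact sequence of finitely generated R-modules. If F is reflexive and G is torsion-free, then E is reflexive. -/
/-!
Let `K` be the fraction field of `R`. An `R`-linear map from a finitely presented module to `K`
becomes `R`-valued after multiplication by a nonzero scalar. Hence a functional on `E ⊆ F` extends
to `F` up to a nonzero scalar (extend it over `K` first), which makes `f** : E** → F**` injective;
and a finitely generated torsion-free module, which embeds in its localization at `K`, is separated
by its dual. Now for `φ ∈ E**`, reflexivity of `F` gives `x ∈ F` with `f** φ = eval x`. Every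
functional on `G` vanishes at `g x`, so `g x = 0`, `x = f e`, and injectivity of `f**` gives
`φ = eval e`.
-/

open Module nonZeroDivisors

theorem Module.Dual.eval_injective_of_injective {R E F : Type*} [CommRing R] [AddCommGroup E]
    [Module R E] [AddCommGroup F] [Module R F] {f : E →ₗ[R] F} (hf : Function.Injective f)
    (hF : Function.Injective (Dual.eval R F)) : Function.Injective (Dual.eval R E) := by
  have : f.dualMap.dualMap ∘ Dual.eval R E = Dual.eval R F ∘ f :=
    congr(⇑$(Dual.eval_naturality f))
  exact Function.Injective.of_comp (f := f.dualMap.dualMap) (this ▸ hF.comp hf)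

section Domain

variable {R : Type*} [CommRing R] [IsDomain R]

variable (R) in
theorem Module.Dual.eval_injective_of_isTorsionFree (M : Type*) [AddCommGroup M] [Module R M]
    [FinitePresentation R M] [IsTorsionFree R M] : Function.Injective (Dual.eval R M) := by
  let K := FractionRing R
  let mk := LocalizedModule.mkLinearMap R⁰ M
  refine (injective_iff_map_eq_zero _).2 fun m hm => ?_
  have hmk : mk m = 0 := by
    rw [← forall_dual_apply_eq_zero_iff K]
    intro φ
    obtain ⟨lam, s, hlam⟩ := FinitePresentation.exists_lift_of_isLocalizedModule R⁰
      (Algebra.linearMap R K) (φ.restrictScalars R ∘ₗ mk)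
    have hs : algebraMap R K (lam m) = s • φ (mk m) := congr($hlam m)
    rw [show lam m = 0 from congr($hm lam), map_zero] at hs
    exact (smul_eq_zero.1 hs.symm).resolve_left (nonZeroDivisors.coe_ne_zero s)
  obtain ⟨s, hs⟩ := (IsLocalizedModule.eq_zero_iff R⁰ mk).1 hmk
  exact (smul_eq_zero.1 hs).resolve_left (nonZeroDivisors.coe_ne_zero s)

variable {E F : Type*} [AddCommGroup E] [Module R E] [AddCommGroup F] [Module R F]
  [FinitePresentation R F]

theorem LinearMap.exists_dualMap_eq_smul_of_injective {f : E →ₗ[R] F}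
    (hf : Function.Injective f) (lam : Dual R E) :
    ∃ s : R, s ≠ 0 ∧ ∃ mu : Dual R F, f.dualMap mu = s • lam := by
  let K := FractionRing R
  let mkE := LocalizedModule.mkLinearMap R⁰ E
  let mkF := LocalizedModule.mkLinearMap R⁰ F
  let fK := (IsLocalizedModule.map R⁰ mkE mkF f).extendScalarsOfIsLocalization R⁰ K
  let lamK :=
    (IsLocalizedModule.map R⁰ mkE (Algebra.linearMap R K) lam).extendScalarsOfIsLocalization R⁰ K
  obtain ⟨h, hh⟩ := fK.exists_leftInverse_of_injective
    (LinearMap.ker_eq_bot.2 (IsLocalizedModule.map_injective R⁰ mkE mkF f hf))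
  obtain ⟨mu, s, hmu⟩ := FinitePresentation.exists_lift_of_isLocalizedModule R⁰
    (Algebra.linearMap R K) ((lamK ∘ₗ h).restrictScalars R ∘ₗ mkF)
  refine ⟨s, nonZeroDivisors.coe_ne_zero s, mu,
    LinearMap.ext fun e => IsFractionRing.injective R K ?_⟩
  have hh_mk : h (mkF (f e)) = mkE e := by
    rw [← IsLocalizedModule.map_apply R⁰ mkE mkF f e]
    exact congr($hh (mkE e))
  have hlamK_mk : lamK (mkE e) = algebraMap R K (lam e) :=
    IsLocalizedModule.map_apply R⁰ mkE (Algebra.linearMap R K) lam e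
  calc algebraMap R K (mu (f e))
      = s • lamK (h (mkF (f e))) := congr($hmu (f e))
    _ = algebraMap R K ((s : R) • lam e) := by
      rw [hh_mk, hlamK_mk]
      exact (map_smul (Algebra.linearMap R K) (s : R) (lam e)).symm

theorem LinearMap.dualMap_dualMap_injective_of_injective {f : E →ₗ[R] F}
    (hf : Function.Injective f) : Function.Injective f.dualMap.dualMap := by
  refine (injective_iff_map_eq_zero _).2 fun φ hφ => LinearMap.ext fun lam => ?_
  obtain ⟨s, hs, mu, hmu⟩ := LinearMap.exists_dualMap_eq_smul_of_injective hf lam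
  have : s • φ lam = 0 := by
    rw [← map_smul, ← hmu]
    exact congr($hφ mu)
  exact (smul_eq_zero.1 this).resolve_left hs

end Domain

theorem reflexive_of_sub_of_torsionFree_quotient_general
    (R E F G : Type*) [CommRing R] [IsDomain R] [IsNoetherianRing R]
    [AddCommGroup E] [Module R E] [AddCommGroup F] [Module R F]
    [AddCommGroup G] [Module R G]
    [Module.Finite R F] [Module.Finite R G]
    (f : E →ₗ[R] F) (g : F →ₗ[R] G)
    (hf : Function.Injective f)
    (hfg : LinearMap.range f = LinearMap.ker g)
    (hF : Module.IsReflexive R F) (hG : NoZeroSMulDivisors R G) :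
    Module.IsReflexive R E := by
  have := finitePresentation_of_finite R F
  have := finitePresentation_of_finite R G
  have hevalF := bijective_dual_eval R F
  refine ⟨Dual.eval_injective_of_injective hf hevalF.1, fun φ => ?_⟩
  obtain ⟨x, hx⟩ := hevalF.2 (f.dualMap.dualMap φ)
  have hgx : g x = 0 := by
    refine (injective_iff_map_eq_zero _).1 (Dual.eval_injective_of_isTorsionFree R G) _ ?_
    ext ν
    have hgf : g ∘ₗ f = 0 := LinearMap.range_le_ker_iff.1 hfg.le
    calc ν (g x) = φ (ν ∘ₗ g ∘ₗ f) := congr($hx (g.dualMap ν))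
      _ = 0 := by rw [hgf, LinearMap.comp_zero, map_zero]
  obtain ⟨e, rfl⟩ : x ∈ LinearMap.range f := hfg ▸ hgx
  exact ⟨e, LinearMap.dualMap_dualMap_injective_of_injective hf
    (congr($(Dual.eval_naturality f) e).trans hx)⟩

/-- Let `R` be a commutative Noetherian integral domain and
`0 → E → F → G → 0` a short exact sequence of finitely generated `R`-modules.
If `F` is reflexive and `G` is torsion-free, then `E` is reflexive. -/
theorem reflexive_of_sub_of_torsionFree_quotient
    (R E F G : Type*) [CommRing R] [IsDomain R] [IsNoetherianRing R]
    [AddCommGroup E] [Module R E] [AddCommGroup F] [Module R F]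
    [AddCommGroup G] [Module R G]
    [Module.Finite R E] [Module.Finite R F] [Module.Finite R G]
    (f : E →ₗ[R] F) (g : F →ₗ[R] G)
    (hf : Function.Injective f) (hg : Function.Surjective g)
    (hfg : LinearMap.range f = LinearMap.ker g)
    (hF : Module.IsReflexive R F) (hG : NoZeroSMulDivisors R G) :
    Module.IsReflexive R E :=
  reflexive_of_sub_of_torsionFree_quotient_general R E F G f g hf hfg hF hG
end

section
/- Let R be a DVR with uniformizer π and let E' ⊆ E be finitely generated torsion-free modules over a two-(or higher)-dimensional Noetherian normal domain A flat over R, such that E/E' is killed by π and both E⊗_R k and E'⊗_R k are torsion-free A⊗k-modules. Let α : E'⊗k → E⊗k be the induced map. Then there are exact sequences 0 → Ker(α) → E'⊗k → Im(α) → 0 and 0 → Im(α) → E⊗k → Coker(α) → 0, and multiplication by π induces an isomorphism Coker(α) ≅ Ker(α). -/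
open Submodule

section
variable (A M : Type*) [CommRing A] [AddCommGroup M] [Module A M]

/-- Reduction of a module modulo an ideal `I`: `M ⊗ A/I = M / I•M`. -/
abbrev ModRed (I : Ideal A) := M ⧸ (I • (⊤ : Submodule A M))

/-- The map on reductions mod `I` induced by the inclusion of a submodule. -/
noncomputable def redMap (I : Ideal A) (N : Submodule A M) :
    ModRed A N I →ₗ[A] ModRed A M I :=
  Submodule.mapQ _ _ N.subtype
    (Submodule.map_le_iff_le_comap.mp
      (by rw [Submodule.map_smul'']; exact Submodule.smul_mono le_rfl le_top))
end

set_option maxHeartbeats 1600000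

/-- (Langton's Proposition 7, module-theoretically.)  Let
`R` be a DVR with uniformizer `π`, `A` a Noetherian normal domain flat over
`R`, and `E' ⊆ E` finitely generated torsion-free `A`-modules with
`πE ⊆ E' ⊆ E` and `E ⊗ k`, `E' ⊗ k` torsion-free over `A ⊗ k = A/(π)`.
Let `α : E'⊗k → E⊗k` be the induced map.  Then there are exact sequences
`0 → Ker α → E'⊗k → Im α → 0` and `0 → Im α → E⊗k → Coker α → 0`, and
multiplication by `π` induces an isomorphism `Coker α ≅ Ker α`. -/
theorem langton_elementary_transformation
    (R : Type*) [CommRing R] [IsDomain R] [IsDiscreteValuationRing R]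
    (π : R) (hπ : Irreducible π)
    (A : Type*) [CommRing A] [IsDomain A] [IsNoetherianRing A]
    [IsIntegrallyClosed A] [Algebra R A] [Module.Flat R A]
    (E : Type*) [AddCommGroup E] [Module A E] [Module.Finite A E]
    [NoZeroSMulDivisors A E]
    (E' : Submodule A E) [Module.Finite A E']
    -- `π E ⊆ E'`
    (hπE : ∀ x : E, (algebraMap R A π) • x ∈ E')
    -- `E ⊗ k` and `E' ⊗ k` are torsion-free over `A/(π)`
    (htfE : ∀ (a : A) (x : ModRed A E (Ideal.span {algebraMap R A π})),
      a • x = 0 → a ∈ Ideal.span {algebraMap R A π} ∨ x = 0)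
    (htfE' : ∀ (a : A) (x : ModRed A E' (Ideal.span {algebraMap R A π})),
      a • x = 0 → a ∈ Ideal.span {algebraMap R A π} ∨ x = 0) :
    -- the two canonical exact sequences
    Function.Exact
      (LinearMap.ker (redMap A E (Ideal.span {algebraMap R A π}) E')).subtype
      (redMap A E (Ideal.span {algebraMap R A π}) E') ∧
    Function.Exact (redMap A E (Ideal.span {algebraMap R A π}) E')
      (LinearMap.range (redMap A E (Ideal.span {algebraMap R A π}) E')).mkQ ∧
    -- multiplication by `π` induces an isomorphism `Coker α ≅ Ker α`
    ∃ ψ : (ModRed A E (Ideal.span {algebraMap R A π}) ⧸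
        LinearMap.range (redMap A E (Ideal.span {algebraMap R A π}) E')) ≃ₗ[A]
        LinearMap.ker (redMap A E (Ideal.span {algebraMap R A π}) E'),
      ∀ x : E,
        (ψ (Submodule.Quotient.mk (Submodule.Quotient.mk x)) :
            ModRed A E' (Ideal.span {algebraMap R A π})) =
          Submodule.Quotient.mk (⟨(algebraMap R A π) • x, hπE x⟩ : E') := by
  set p : A := algebraMap R A π with hp_def
  set I : Ideal A := Ideal.span {p} with hI
  have hp0 : p ≠ 0 := by
    intro h0
    have h1 : IsSMulRegular R π := fun a b hab => by
      simpa using mul_left_cancel₀ hπ.ne_zero (by simpa [smul_eq_mul] using hab)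
    have h2 : IsSMulRegular (TensorProduct R A R) π := h1.lTensor A
    have h3 : IsSMulRegular A π :=
      h2.of_injective (TensorProduct.rid R A).symm.toLinearMap
        (TensorProduct.rid R A).symm.injective
    have h4 : π • (1 : A) = π • (0 : A) := by
      rw [smul_zero, ← Algebra.algebraMap_eq_smul_one, ← hp_def, h0]
    exact one_ne_zero (h3 h4)
  have hmemE : ∀ x : E, x ∈ (I • (⊤ : Submodule A E)) ↔ ∃ y : E, p • y = x := by
    intro x
    rw [hI, Submodule.ideal_span_singleton_smul]
    constructor
    · intro hx
      rw [← SetLike.mem_coe, Submodule.coe_pointwise_smul] at hx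
      obtain ⟨y, -, hy⟩ := hx
      exact ⟨y, hy⟩
    · rintro ⟨y, rfl⟩; exact Submodule.smul_mem_pointwise_smul y p ⊤ trivial
  have hmemE' : ∀ x : E', x ∈ (I • (⊤ : Submodule A E')) ↔ ∃ y : E', p • y = x := by
    intro x
    rw [hI, Submodule.ideal_span_singleton_smul]
    constructor
    · intro hx
      rw [← SetLike.mem_coe, Submodule.coe_pointwise_smul] at hx
      obtain ⟨y, -, hy⟩ := hx
      exact ⟨y, hy⟩
    · rintro ⟨y, rfl⟩; exact Submodule.smul_mem_pointwise_smul y p ⊤ trivial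
  set α := redMap A E I E' with hα
  have hα_mk : ∀ y : E', α (Submodule.Quotient.mk y) = Submodule.Quotient.mk (y : E) := by
    intro y; rw [hα, redMap, Submodule.mapQ_apply]; rfl
  let f0 : E →ₗ[A] E' := LinearMap.codRestrict E' ((p : A) • LinearMap.id) hπE
  have hf0 : ∀ x : E, (f0 x : E) = p • x := fun x => rfl
  let f1 : E →ₗ[A] ModRed A E' I := (I • (⊤ : Submodule A E')).mkQ ∘ₗ f0
  have hf1 : ∀ x : E, f1 x = Submodule.Quotient.mk (f0 x) := fun x => rfl
  have hf1ker : ∀ x : E, f1 x ∈ LinearMap.ker α := by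
    intro x
    rw [LinearMap.mem_ker, hf1, hα_mk, Submodule.Quotient.mk_eq_zero]
    exact (hmemE _).mpr ⟨x, rfl⟩
  let f : E →ₗ[A] LinearMap.ker α := LinearMap.codRestrict _ f1 hf1ker
  have hkerf : LinearMap.ker f = E' := by
    ext x
    simp only [LinearMap.mem_ker]
    constructor
    · intro hx
      have h1 : f1 x = 0 := congrArg Subtype.val hx
      have h2 : f0 x ∈ (I • (⊤ : Submodule A E')) := by
        rwa [hf1, Submodule.Quotient.mk_eq_zero] at h1
      obtain ⟨y, hy⟩ := (hmemE' (f0 x)).mp h2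
      have h3 : p • (y : E) = p • x := congrArg Subtype.val hy
      have h4 := smul_right_injective E hp0 h3
      rw [← h4]; exact y.2
    · intro hx
      apply Subtype.ext
      show f1 x = 0
      rw [hf1, Submodule.Quotient.mk_eq_zero]
      exact (hmemE' _).mpr ⟨⟨x, hx⟩, Subtype.ext rfl⟩
  have hfsurj : Function.Surjective f := by
    rintro ⟨z, hz⟩
    obtain ⟨y, rfl⟩ := Submodule.Quotient.mk_surjective _ z
    rw [LinearMap.mem_ker, hα_mk, Submodule.Quotient.mk_eq_zero] at hz
    obtain ⟨x, hx⟩ := (hmemE _).mp hz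
    refine ⟨x, Subtype.ext ?_⟩
    show f1 x = Submodule.Quotient.mk y
    rw [hf1]
    exact congrArg _ (Subtype.ext hx)
  let q : E →ₗ[A] (ModRed A E I ⧸ LinearMap.range α) :=
    (LinearMap.range α).mkQ ∘ₗ (I • (⊤ : Submodule A E)).mkQ
  have hq : ∀ x : E, q x = Submodule.Quotient.mk (Submodule.Quotient.mk x) := fun x => rfl
  have hqsurj : Function.Surjective q :=
    (LinearMap.range α).mkQ_surjective.comp (I • (⊤ : Submodule A E)).mkQ_surjective
  have hkerq : LinearMap.ker q = E' := by
    ext x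
    simp only [LinearMap.mem_ker]
    constructor
    · intro hx
      rw [hq] at hx
      have h1 : (Submodule.Quotient.mk x : ModRed A E I) ∈ LinearMap.range α :=
        (Submodule.Quotient.mk_eq_zero _).mp hx
      obtain ⟨z, hz⟩ := h1
      obtain ⟨y, rfl⟩ := Submodule.Quotient.mk_surjective _ z
      rw [hα_mk, Submodule.Quotient.eq] at hz
      obtain ⟨w, hw⟩ := (hmemE _).mp hz
      have : x = (y : E) - p • w := by rw [hw]; abel
      rw [this]
      exact sub_mem y.2 (hπE w)
    · intro hx
      have h1 : (Submodule.Quotient.mk x : ModRed A E I) ∈ LinearMap.range α :=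
        ⟨Submodule.Quotient.mk ⟨x, hx⟩, hα_mk _⟩
      rw [hq]
      exact (Submodule.Quotient.mk_eq_zero _).mpr h1
  let ψ : (ModRed A E I ⧸ LinearMap.range α) ≃ₗ[A] LinearMap.ker α :=
    (q.quotKerEquivOfSurjective hqsurj).symm ≪≫ₗ
      Submodule.quotEquivOfEq _ _ (hkerq.trans hkerf.symm) ≪≫ₗ
      f.quotKerEquivOfSurjective hfsurj
  have hψ : ∀ x : E,
      ((ψ (Submodule.Quotient.mk (Submodule.Quotient.mk x)) : LinearMap.ker α) :
        ModRed A (E' : Submodule A E) I) =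
        Submodule.Quotient.mk (⟨p • x, hπE x⟩ : E') := by
    intro x
    have h1 : q.quotKerEquivOfSurjective hqsurj (Submodule.Quotient.mk x) = q x := rfl
    have h2 : (q.quotKerEquivOfSurjective hqsurj).symm (q x) = Submodule.Quotient.mk x := by
      rw [← h1, LinearEquiv.symm_apply_apply]
    have h3 : (Submodule.Quotient.mk (Submodule.Quotient.mk x) :
        ModRed A E I ⧸ LinearMap.range α) = q x := rfl
    rw [h3]
    show ((f.quotKerEquivOfSurjective hfsurj
        (Submodule.quotEquivOfEq _ _ (hkerq.trans hkerf.symm)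
          ((q.quotKerEquivOfSurjective hqsurj).symm (q x))) : LinearMap.ker α) :
        ModRed A (E' : Submodule A E) I) = _
    rw [h2, Submodule.quotEquivOfEq_mk]
    have h4 : f.quotKerEquivOfSurjective hfsurj (Submodule.Quotient.mk x) = f x := rfl
    rw [h4]
    rfl
  refine ⟨LinearMap.exact_subtype_ker_map _, LinearMap.exact_map_mkQ_range _, ψ, hψ⟩
end
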